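/- arXiv:1409.0755 — 3 statements merged into one kernel-verified Lean document; each statement's English description precedes it below -/
import Mathlib

section
/- Let Π₁, Π₂ be self-adjoint idempotents on a complex inner product space H and ψ a unit vector. Suppose the consistency condition ⟨ψ, Π₁ Π₂ Π₁ ψ⟩ = ⟨ψ, Π₂ Π₁ ψ⟩ holds (more precisely, ⟨ψ, Π₂ Π₁ ψ⟩ is real and equal to ⟨ψ, Π₁ Π₂ Π₁ ψ⟩). Then ⟨ψ, Π₁ ψ⟩ + ⟨ψ, Π₂ ψ⟩ − 1 ≤ ⟨ψ, Π₁ Π₂ Π₁ ψ⟩. -/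
/-! With `Qᵢ = 1 - Πᵢ`, the operator `Q₁ Q₂ Q₁` is positive, since
`⟨ψ, Q₁ Q₂ Q₁ ψ⟩ = ‖Q₂ Q₁ ψ‖²`. Expanding,
`re ⟨ψ, Q₁ Q₂ Q₁ ψ⟩ = 1 - τ(h₁) - τ(h₂) + 2 re ⟨ψ, Π₂ Π₁ ψ⟩ - re ⟨ψ, Π₁ Π₂ Π₁ ψ⟩`,
and the consistency condition turns the right-hand side into
`1 - τ(h₁) - τ(h₂) + τ(h₁ ∧ h₂)`. -/

open RCLike

namespace LinearMap

variable {𝕜 E : Type*} [RCLike 𝕜] [NormedAddCommGroup E] [InnerProductSpace 𝕜 E]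

theorem IsPositive.conj_of_isSymmetric {T S : E →ₗ[𝕜] E} (hT : T.IsPositive)
    (hS : S.IsSymmetric) : (S * T * S).IsPositive := by
  refine ⟨fun x y => ?_, fun x => ?_⟩
  · simp only [Module.End.mul_apply, hS _, hT.isSymmetric _]
  · simpa only [Module.End.mul_apply, hS _] using hT.re_inner_nonneg_left (S x)

theorem IsSymmetricProjection.one_sub {p : E →ₗ[𝕜] E} (hp : p.IsSymmetricProjection) :
    (1 - p).IsSymmetricProjection :=
  ⟨hp.isIdempotentElem.one_sub, IsSymmetric.id.sub hp.isSymmetric⟩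

theorem re_inner_one_sub_mul_one_sub_mul_one_sub_apply {P₁ P₂ : E →ₗ[𝕜] E}
    (h₁ : P₁.IsSymmetricProjection) (h₂ : P₂.IsSymmetric) (x : E) :
    re (inner 𝕜 x (((1 - P₁) * (1 - P₂) * (1 - P₁)) x)) =
      re (inner 𝕜 x x) - re (inner 𝕜 x (P₁ x)) - re (inner 𝕜 x (P₂ x))
        + 2 * re (inner 𝕜 x ((P₂ * P₁) x)) - re (inner 𝕜 x ((P₁ * P₂ * P₁) x)) := by
  have hexpand : (1 - P₁) * (1 - P₂) * (1 - P₁)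
      = 1 - P₁ - P₂ + P₂ * P₁ + P₁ * P₂ - P₁ * P₂ * P₁ := by
    calc (1 - P₁) * (1 - P₂) * (1 - P₁)
        = 1 - P₁ - P₂ + P₂ * P₁ - P₁ + P₁ * P₁ + P₁ * P₂ - P₁ * P₂ * P₁ := by noncomm_ring
      _ = _ := by rw [h₁.isIdempotentElem.eq]; abel
  have hswap : re (inner 𝕜 x ((P₁ * P₂) x)) = re (inner 𝕜 x ((P₂ * P₁) x)) := by
    rw [Module.End.mul_apply, ← h₁.isSymmetric, ← h₂, inner_re_symm, Module.End.mul_apply]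
  rw [hexpand]
  simp only [sub_apply, add_apply, Module.End.one_apply, inner_sub_right, inner_add_right,
    map_sub, map_add, hswap]
  ring

end LinearMap

open LinearMap in
theorem CH_lower_bound_conjunction
    {H : Type*} [NormedAddCommGroup H] [InnerProductSpace ℂ H]
    (P₁ P₂ : Module.End ℂ H)
    (h₁idem : P₁ * P₁ = P₁) (h₂idem : P₂ * P₂ = P₂)
    (h₁sa : ∀ x y : H, (inner ℂ (P₁ x) y : ℂ) = inner ℂ x (P₁ y))
    (h₂sa : ∀ x y : H, (inner ℂ (P₂ x) y : ℂ) = inner ℂ x (P₂ y))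
    (ψ : H) (hψ : (inner ℂ ψ ψ : ℂ) = 1)
    (hCH : (inner ℂ ψ ((P₂ * P₁) ψ) : ℂ) = (inner ℂ ψ ((P₁ * P₂ * P₁) ψ) : ℂ)) :
    (inner ℂ ψ (P₁ ψ) : ℂ).re + (inner ℂ ψ (P₂ ψ) : ℂ).re - 1
      ≤ (inner ℂ ψ ((P₁ * P₂ * P₁) ψ) : ℂ).re := by
  have hP₁ : P₁.IsSymmetricProjection := ⟨h₁idem, h₁sa⟩
  have hP₂ : P₂.IsSymmetricProjection := ⟨h₂idem, h₂sa⟩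
  have hpos :=
    (hP₂.one_sub.isPositive.conj_of_isSymmetric hP₁.one_sub.isSymmetric).re_inner_nonneg_right ψ
  rw [re_inner_one_sub_mul_one_sub_mul_one_sub_apply hP₁ hP₂.isSymmetric, hCH, hψ] at hpos
  simp only [one_re, re_to_complex] at hpos
  linarith
end

section
/- Let R be a commutative ring and let E, F ∈ R with F·F = F, and let e₁,…,eₘ ∈ R be idempotents with E = ∏_{i=1}^m (1 − eᵢ). Then ∏_{i=1}^{m} (1 − eᵢ + eᵢ·F) = E + F − E·F. -/
/-!
Since `F` is idempotent, `x ↦ F + (1 - F) * x` is multiplicative (it is the projection onto the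
factor `(1 - F) R` of `R ≅ F R × (1 - F) R`, followed by the inclusion `y ↦ F + y`). Each factor
`1 - eᵢ + eᵢ F` is the image of `1 - eᵢ`, so the product is the image `F + (1 - F) E` of `E`.
-/

namespace IsIdempotentElem

variable {R : Type*} [CommRing R] {F : R}

def addOneSubMulHom (hF : IsIdempotentElem F) : R →* R where
  toFun x := F + (1 - F) * x
  map_one' := by ring
  map_mul' x y := by linear_combination (-(1 - x) * (1 - y)) * hF.eq

theorem prod_add_one_sub_mul (hF : IsIdempotentElem F) {ι : Type*} (s : Finset ι) (x : ι → R) :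
    ∏ i ∈ s, (F + (1 - F) * x i) = F + (1 - F) * ∏ i ∈ s, x i :=
  (map_prod hF.addOneSubMulHom x s).symm

end IsIdempotentElem

theorem idempotent_product_EF_identity_general
    {R : Type*} [CommRing R] {m : ℕ} (e : Fin m → R)
    (F : R) (hF : F * F = F)
    (E : R) (hE : E = ∏ i, (1 - e i)) :
    (∏ i, (1 - e i + e i * F)) = E + F - E * F := by
  calc ∏ i, (1 - e i + e i * F) = ∏ i, (F + (1 - F) * (1 - e i)) :=
        Finset.prod_congr rfl fun i _ => by ring
    _ = F + (1 - F) * E := by rw [IsIdempotentElem.prod_add_one_sub_mul hF, hE]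
    _ = E + F - E * F := by ring

theorem idempotent_product_EF_identity
    {R : Type*} [CommRing R] {m : ℕ} (e : Fin m → R)
    (he : ∀ i, e i * e i = e i)
    (F : R) (hF : F * F = F)
    (E : R) (hE : E = ∏ i, (1 - e i)) :
    (∏ i, (1 - e i + e i * F)) = E + F - E * F :=
  idempotent_product_EF_identity_general e F hF E hE
end

section
/- Let Π₁, Π₂, Π₃ be self-adjoint idempotents on a complex inner product space H and ψ a unit vector, and assume the CH condition holds for the family {Π₁,Π₂,Π₃} (i.e., ⟨ψ, C_{h_α} C_{h_β}† ψ⟩ = 0 for distinct binary sequences α ≠ β, where C_{h_α} = Π₁^{α₁}Π₂^{α₂}Π₃^{α₃} with Π^0 = Π, Π^1 = 1−Π). Then ⟨ψ, Π₁Π₂Π₃Π₃Π₂Π₁ ψ⟩ = ⟨ψ, Π₁Π₂Π₃ ψ⟩. -/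
/-!
The operators `C_β†` of all branches `β` sum to the identity, since each factor splits as
`Π + (1 - Π) = 1`. Hence `⟨ψ, C_h ψ⟩ = ∑_β ⟨ψ, C_h C_β† ψ⟩`, and the consistency condition kills
every term except `β = h`.
-/

section History

variable {R : Type*} [Ring R]

def historyFactor (b : Bool) (p : R) : R := if b then 1 - p else p

theorem sum_historyFactor (p : R) : ∑ b : Bool, historyFactor b p = 1 := by
  simp [historyFactor]

/-- For self-adjoint `p i` this is the adjoint `C_β†` of the history operator
`C_β = Π₀^{β₀} ⋯ Π_{n-1}^{β_{n-1}}`. -/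
def reverseHistoryOp {n : ℕ} (p : Fin n → R) (β : Fin n → Bool) : R :=
  (List.ofFn fun i => historyFactor (β i) (p i)).reverse.prod

theorem sum_reverseHistoryOp_eq_one : ∀ {n : ℕ} (p : Fin n → R), ∑ β, reverseHistoryOp p β = 1
  | 0, _ => by simp [reverseHistoryOp]
  | n + 1, p => by
    rw [← (Fin.consEquiv fun _ => Bool).sum_comp, Fintype.sum_prod_type]
    calc ∑ b, ∑ β, reverseHistoryOp p (Fin.consEquiv _ (b, β))
        = ∑ b, ∑ β, reverseHistoryOp (Fin.tail p) β * historyFactor b (p 0) := by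
          simp [reverseHistoryOp, List.ofFn_succ, Fin.consEquiv, Fin.tail]
      _ = 1 := by
          simp_rw [← Finset.sum_mul, sum_reverseHistoryOp_eq_one, one_mul, sum_historyFactor]

end History

theorem map_mul_eq_map_of_sum_eq_one {ι R M F : Type*} [Fintype ι] [NonAssocSemiring R]
    [AddCommMonoid M] [FunLike F R M] [AddMonoidHomClass F R M] (f : F) (C D : ι → R)
    (hD : ∑ β, D β = 1) (horth : ∀ α β, α ≠ β → f (C α * D β) = 0) (α : ι) :
    f (C α * D α) = f (C α) :=
  calc f (C α * D α) = ∑ β, f (C α * D β) :=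
        (Finset.sum_eq_single α (fun β _ hβ => horth α β hβ.symm) (by simp)).symm
    _ = f (C α) := by rw [← map_sum, ← Finset.mul_sum, hD, mul_one]

theorem CH_three_time_history_general
    {H : Type*} [NormedAddCommGroup H] [InnerProductSpace ℂ H]
    (P₁ P₂ P₃ : Module.End ℂ H)
    (ψ : H)
    (hCH : ∀ α β : Fin 3 → Bool, α ≠ β →
      (inner ℂ ψ
        ((((if α 0 then 1 - P₁ else P₁) * (if α 1 then 1 - P₂ else P₂) *
            (if α 2 then 1 - P₃ else P₃)) *
          ((if β 2 then 1 - P₃ else P₃) * (if β 1 then 1 - P₂ else P₂) *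
            (if β 0 then 1 - P₁ else P₁))) ψ) : ℂ) = 0) :
    (inner ℂ ψ ((P₁ * P₂ * P₃ * P₃ * P₂ * P₁) ψ) : ℂ) =
      (inner ℂ ψ ((P₁ * P₂ * P₃) ψ) : ℂ) := by
  let C : (Fin 3 → Bool) → Module.End ℂ H := fun α =>
    (if α 0 then 1 - P₁ else P₁) * (if α 1 then 1 - P₂ else P₂) * (if α 2 then 1 - P₃ else P₃)
  have hCdag : ∀ β, reverseHistoryOp ![P₁, P₂, P₃] β =
      (if β 2 then 1 - P₃ else P₃) * (if β 1 then 1 - P₂ else P₂) *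
        (if β 0 then 1 - P₁ else P₁) := by
    intro β
    simp [reverseHistoryOp, historyFactor, List.ofFn_succ, mul_assoc]
  have hconsistent := map_mul_eq_map_of_sum_eq_one
    ((innerₛₗ ℂ ψ).comp (LinearMap.applyₗ ψ)) C (reverseHistoryOp ![P₁, P₂, P₃])
    (sum_reverseHistoryOp_eq_one _) (fun α β h => by rw [hCdag]; exact hCH α β h) (fun _ => false)
  simpa [C, hCdag, mul_assoc] using hconsistent

theorem CH_three_time_history
    {H : Type*} [NormedAddCommGroup H] [InnerProductSpace ℂ H]
    (P₁ P₂ P₃ : Module.End ℂ H)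
    (h₁idem : P₁ * P₁ = P₁) (h₂idem : P₂ * P₂ = P₂) (h₃idem : P₃ * P₃ = P₃)
    (h₁sa : ∀ x y : H, (inner ℂ (P₁ x) y : ℂ) = inner ℂ x (P₁ y))
    (h₂sa : ∀ x y : H, (inner ℂ (P₂ x) y : ℂ) = inner ℂ x (P₂ y))
    (h₃sa : ∀ x y : H, (inner ℂ (P₃ x) y : ℂ) = inner ℂ x (P₃ y))
    (ψ : H) (hψ : (inner ℂ ψ ψ : ℂ) = 1)
    (hCH : ∀ α β : Fin 3 → Bool, α ≠ β →
      (inner ℂ ψ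
        ((((if α 0 then 1 - P₁ else P₁) * (if α 1 then 1 - P₂ else P₂) *
            (if α 2 then 1 - P₃ else P₃)) *
          ((if β 2 then 1 - P₃ else P₃) * (if β 1 then 1 - P₂ else P₂) *
            (if β 0 then 1 - P₁ else P₁))) ψ) : ℂ) = 0) :
    (inner ℂ ψ ((P₁ * P₂ * P₃ * P₃ * P₂ * P₁) ψ) : ℂ) =
      (inner ℂ ψ ((P₁ * P₂ * P₃) ψ) : ℂ) :=
  CH_three_time_history_general P₁ P₂ P₃ ψ hCH
end
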